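/- arXiv:2509.02703 — 4 statements merged into one kernel-verified Lean document; each statement's English description precedes it below -/
import Mathlib

section
/- For all real parameters η > 0, φ > 0 and every natural number r, the r-th raw moment of the Copoun distribution is ∫₀^∞ λ^r·(η²/(φ+η))·(1 + φη²λ³/6)·e^{-ηλ} dλ = (r! / (η^r(φ+η)))·[η + (φ/6)(r+1)(r+2)(r+3)]. -/
open Real MeasureTheory Set

section GammaMoments

open scoped Nat

variable {b : ℝ}

theorem integral_pow_mul_exp_neg_mul_Ioi (hb : 0 < b) (n : ℕ) :
    ∫ x in Ioi (0 : ℝ), x ^ n * exp (-b * x) = n ! / b ^ (n + 1) := by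
  have h := integral_rpow_mul_exp_neg_mul_Ioi (a := n + 1) (by positivity) hb
  simp only [add_sub_cancel_right, rpow_natCast, neg_mul] at h ⊢
  rw [h, Gamma_nat_eq_factorial, one_div, inv_rpow hb.le, ← Nat.cast_succ, rpow_natCast,
    inv_mul_eq_div]

theorem integrableOn_pow_mul_exp_neg_mul_Ioi (hb : 0 < b) (n : ℕ) :
    IntegrableOn (fun x : ℝ => x ^ n * exp (-b * x)) (Ioi 0) :=
  .of_integral_ne_zero (by rw [integral_pow_mul_exp_neg_mul_Ioi hb]; positivity)

theorem integral_pow_mul_one_add_mul_pow_mul_exp_neg_mul_Ioi (hb : 0 < b) (c d : ℝ)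
    (r k : ℕ) :
    ∫ x in Ioi (0 : ℝ), x ^ r * (c * (1 + d * x ^ k) * exp (-b * x))
      = c * (r ! / b ^ (r + 1) + d * ((r + k) ! / b ^ (r + k + 1))) := by
  have hsplit : ∀ x : ℝ, x ^ r * (c * (1 + d * x ^ k) * exp (-b * x))
      = c * (x ^ r * exp (-b * x)) + c * d * (x ^ (r + k) * exp (-b * x)) := fun x => by
    ring
  simp only [hsplit]
  rw [integral_add ((integrableOn_pow_mul_exp_neg_mul_Ioi hb r).const_mul c)
      ((integrableOn_pow_mul_exp_neg_mul_Ioi hb (r + k)).const_mul (c * d)),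
    integral_const_mul, integral_const_mul, integral_pow_mul_exp_neg_mul_Ioi hb,
    integral_pow_mul_exp_neg_mul_Ioi hb]
  ring

end GammaMoments

theorem copoun_raw_moment_general (η φ : ℝ) (hη : 0 < η) (r : ℕ) :
    ∫ l in Set.Ioi (0 : ℝ),
      l ^ r * ((η ^ 2 / (φ + η)) * (1 + φ * η ^ 2 * l ^ 3 / 6) * Real.exp (-η * l))
      = ((Nat.factorial r : ℝ) / (η ^ r * (φ + η)))
          * (η + (φ / 6) * ((r : ℝ) + 1) * ((r : ℝ) + 2) * ((r : ℝ) + 3)) := by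
  have hweight : ∀ l : ℝ, 1 + φ * η ^ 2 * l ^ 3 / 6 = 1 + φ * η ^ 2 / 6 * l ^ 3 := fun l => by
    ring
  have hfact : ((r + 3).factorial : ℝ) = r.factorial * ((r + 1) * (r + 2) * (r + 3)) := by
    push_cast [Nat.factorial_succ]
    ring
  simp only [hweight]
  rw [integral_pow_mul_one_add_mul_pow_mul_exp_neg_mul_Ioi hη, hfact]
  field_simp
  ring

/-- The r-th raw moment of the Copoun distribution. -/
theorem copoun_raw_moment (η φ : ℝ) (hη : 0 < η) (hφ : 0 < φ) (r : ℕ) :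
    ∫ l in Set.Ioi (0 : ℝ),
      l ^ r * ((η ^ 2 / (φ + η)) * (1 + φ * η ^ 2 * l ^ 3 / 6) * Real.exp (-η * l))
      = ((Nat.factorial r : ℝ) / (η ^ r * (φ + η)))
          * (η + (φ / 6) * ((r : ℝ) + 1) * ((r : ℝ) + 2) * ((r : ℝ) + 3)) :=
  copoun_raw_moment_general η φ hη r
end

section
/- For all real parameters η > 0 and φ > 0, the third raw moment of the PCD is ∑_{x=0}^∞ x³·p(x) = (η³ + 2(2φ+3)η² + 6(10φ+1)η + 120φ)/(η³(φ+η)). -/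
/-!
The PCD is the mixture, with weights `η / (φ + η)` and `φ / (φ + η)`, of the geometric law
`θ (1 - θ)ⁿ` and the negative binomial law `C(n + 3, 3) θ⁴ (1 - θ)ⁿ`, where `θ = η / (1 + η)`.
Writing `q = 1 - θ` and expanding `n³` and `n³ (n + 1) (n + 2) (n + 3)` in the basis of rising
factorials `(n + 1) ⋯ (n + k)`, both third moments follow from
`∑ (n + 1) ⋯ (n + k) qⁿ = k! / (1 - q)^(k + 1)`.
-/

section DescFactorialGeometric

open Nat

variable {𝕜 : Type*} [NormedField 𝕜] {q : 𝕜}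

theorem hasSum_descFactorial_mul_geometric (k : ℕ) (hq : ‖q‖ < 1) :
    HasSum (fun n : ℕ ↦ ((n + k).descFactorial k : 𝕜) * q ^ n) (k ! / (1 - q) ^ (k + 1)) := by
  convert! (hasSum_choose_mul_geometric_of_norm_lt_one k hq).mul_left (k ! : 𝕜) using 1
  · funext n
    rw [descFactorial_eq_factorial_mul_choose, cast_mul, mul_assoc]
  · rw [mul_one_div]

theorem hasSum_pow_three_mul_geometric (hq : ‖q‖ < 1) :
    HasSum (fun n : ℕ ↦ (n : 𝕜) ^ 3 * q ^ n) (q * (1 + 4 * q + q ^ 2) / (1 - q) ^ 4) := by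
  have hk := fun k ↦ hasSum_descFactorial_mul_geometric k hq
  have hq₁ : 1 - q ≠ 0 := sub_ne_zero.2 fun h ↦ by simp [← h] at hq
  convert! (((hk 3).sub ((hk 2).mul_left 6)).add ((hk 1).mul_left 7)).sub (hk 0) using 1
  · funext n
    simp only [descFactorial]
    push_cast
    ring
  · norm_num [factorial]
    field_simp
    ring

theorem hasSum_pow_three_mul_descFactorial_three_mul_geometric (hq : ‖q‖ < 1) :
    HasSum (fun n : ℕ ↦ (n : 𝕜) ^ 3 * (n + 3).descFactorial 3 * q ^ n)
      (24 * q * (1 + 13 * q + 16 * q ^ 2) / (1 - q) ^ 7) := by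
  have hk := fun k ↦ hasSum_descFactorial_mul_geometric k hq
  have hq₁ : 1 - q ≠ 0 := sub_ne_zero.2 fun h ↦ by simp [← h] at hq
  convert! (((hk 6).sub ((hk 5).mul_left 15)).add ((hk 4).mul_left 61)).sub ((hk 3).mul_left 64)
    using 1
  · funext n
    simp only [descFactorial]
    push_cast
    ring
  · norm_num [factorial]
    field_simp
    ring

end DescFactorialGeometric

noncomputable def pcdPmf (η φ : ℝ) (x : ℕ) : ℝ :=
  η ^ 2 / ((φ + η) * (1 + η) ^ (x + 4)) *
    ((1 + η) ^ 3 + (φ * η ^ 2 / 6) * ((x : ℝ) + 1) * ((x : ℝ) + 2) * ((x : ℝ) + 3))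

theorem pcdPmf_eq_mixture {η : ℝ} (φ : ℝ) (hη : 1 + η ≠ 0) (x : ℕ) :
    pcdPmf η φ x = (φ + η)⁻¹ * (η * (η / (1 + η) * (1 + η)⁻¹ ^ x) +
      φ * ((η / (1 + η)) ^ 4 / 6 * (x + 3).descFactorial 3 * (1 + η)⁻¹ ^ x)) := by
  simp only [pcdPmf, Nat.descFactorial, inv_pow, pow_add]
  push_cast
  field_simp

theorem pcd_third_moment_general (η φ : ℝ) (hη : 0 < η) :
    ∑' x : ℕ, (x : ℝ) ^ 3 *
        ((η ^ 2 / ((φ + η) * (1 + η) ^ (x + 4)))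
          * ((1 + η) ^ 3
            + (φ * η ^ 2 / 6) * ((x : ℝ) + 1) * ((x : ℝ) + 2) * ((x : ℝ) + 3)))
      = (η ^ 3 + 2 * (2 * φ + 3) * η ^ 2 + 6 * (10 * φ + 1) * η + 120 * φ)
          / (η ^ 3 * (φ + η)) := by
  have hη₁ : 1 + η ≠ 0 := by positivity
  have hq : ‖(1 + η)⁻¹‖ < 1 := by
    rw [norm_inv, Real.norm_of_nonneg (by positivity)]
    exact inv_lt_one_of_one_lt₀ (by linarith)
  have h1q : 1 - (1 + η)⁻¹ = η / (1 + η) := by field_simp; ring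
  have hmixture := (((hasSum_pow_three_mul_geometric hq).mul_left (η * (η / (1 + η)))).add
    ((hasSum_pow_three_mul_descFactorial_three_mul_geometric hq).mul_left
      (φ * ((η / (1 + η)) ^ 4 / 6)))).mul_left (φ + η)⁻¹
  change ∑' x : ℕ, (x : ℝ) ^ 3 * pcdPmf η φ x = _
  convert! hmixture.tsum_eq using 1
  · exact tsum_congr fun x ↦ by rw [pcdPmf_eq_mixture φ hη₁ x]; ring
  · rw [← div_div, div_eq_inv_mul, h1q]
    congr 1
    field_simp
    ring

/-- The third raw moment of the PCD. -/
theorem pcd_third_moment (η φ : ℝ) (hη : 0 < η) (hφ : 0 < φ) :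
    ∑' x : ℕ, (x : ℝ) ^ 3 *
        ((η ^ 2 / ((φ + η) * (1 + η) ^ (x + 4)))
          * ((1 + η) ^ 3
            + (φ * η ^ 2 / 6) * ((x : ℝ) + 1) * ((x : ℝ) + 2) * ((x : ℝ) + 3)))
      = (η ^ 3 + 2 * (2 * φ + 3) * η ^ 2 + 6 * (10 * φ + 1) * η + 120 * φ)
          / (η ^ 3 * (φ + η)) :=
  pcd_third_moment_general η φ hη
end

section
/- For all real parameters η > 0, φ > 0 and every α with 0 < α < 1, the mean of the three-inflated PCD is ∑_{y=0}^∞ y·P(y) = 3α + (1−α)·(η+4φ)/(η(φ+η)). -/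
/-!
The PCD is the mixture, with weights `η / (φ + η)` and `φ / (φ + η)`, of the geometric law
`η / (1 + η)ˣ⁺¹` and the negative binomial law `C(x + 3, 3) η⁴ / (1 + η)ˣ⁺⁴`, whose means are
`1 / η` and `4 / η`. Both means come from `∑ n C(n + k, k) rⁿ = (k + 1) r / (1 - r)ᵏ⁺²`, and
inflating at `3` with weight `α` adds `3 α` to `1 - α` times the PCD mean.
-/

theorem Nat.mul_add_choose_eq (n k : ℕ) :
    n * (n + k).choose k = (k + 1) * (n + k).choose (k + 1) := by
  have h := Nat.choose_succ_right_eq (n + k) k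
  rw [Nat.add_sub_cancel] at h
  linarith

theorem hasSum_coe_mul_choose_mul_geometric {𝕜 : Type*} [NormedField 𝕜] (k : ℕ) {r : 𝕜}
    (hr : ‖r‖ < 1) :
    HasSum (fun n : ℕ => (n : 𝕜) * (n + k).choose k * r ^ n)
      ((k + 1) * r / (1 - r) ^ (k + 2)) := by
  have hshift :
      HasSum (fun n : ℕ => ((n + k).choose (k + 1) : 𝕜) * r ^ n) (r / (1 - r) ^ (k + 2)) := by
    rw [← hasSum_nat_add_iff' 1]
    have h := (hasSum_choose_mul_geometric_of_norm_lt_one (k + 1) hr).mul_left r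
    rw [mul_one_div] at h
    simpa using h.congr_fun fun n => by
      rw [show n + 1 + k = n + (k + 1) by omega, pow_succ]
      ring
  rw [mul_div_assoc]
  refine (hshift.mul_left ((k : 𝕜) + 1)).congr_fun fun n => ?_
  have hcoef : (n : 𝕜) * (n + k).choose k = (k + 1) * (n + k).choose (k + 1) := by
    simpa using congrArg (Nat.cast : ℕ → 𝕜) (Nat.mul_add_choose_eq n k)
  rw [hcoef, mul_assoc]

theorem Nat.cast_add_three_choose_three (x : ℕ) :
    ((x + 3).choose 3 : ℝ) = (x + 1) * (x + 2) * (x + 3) / 6 := by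
  rw [Nat.cast_choose ℝ (by omega : 3 ≤ x + 3), Nat.add_sub_cancel]
  simp only [Nat.factorial_succ, Nat.cast_mul, Nat.cast_add, Nat.cast_one, Nat.cast_ofNat]
  field_simp
  ring

noncomputable def pcdPMF (η φ : ℝ) (x : ℕ) : ℝ :=
  η ^ 2 / ((φ + η) * (1 + η) ^ (x + 4))
    * ((1 + η) ^ 3 + (φ * η ^ 2 / 6) * ((x : ℝ) + 1) * ((x : ℝ) + 2) * ((x : ℝ) + 3))

theorem pcdPMF_three (η φ : ℝ) :
    pcdPMF η φ 3 = η ^ 2 / ((φ + η) * (1 + η) ^ 7) * ((1 + η) ^ 3 + 20 * φ * η ^ 2) := by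
  rw [pcdPMF]
  ring

theorem hasSum_coe_mul_pcdPMF {η φ : ℝ} (hη : 0 < η) (hφη : φ + η ≠ 0) :
    HasSum (fun x : ℕ => x * pcdPMF η φ x) ((η + 4 * φ) / (η * (φ + η))) := by
  set r : ℝ := (1 + η)⁻¹ with hr_def
  have hr : ‖r‖ < 1 := by
    rw [norm_inv, Real.norm_of_nonneg (by positivity)]
    exact inv_lt_one_of_one_lt₀ (by linarith)
  have hgeom := (hasSum_coe_mul_geometric_of_norm_lt_one hr).mul_left
    (η ^ 2 / ((φ + η) * (1 + η)))
  have hnegbin := (hasSum_coe_mul_choose_mul_geometric 3 hr).mul_left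
    (φ * η ^ 4 / ((φ + η) * (1 + η) ^ 4))
  norm_num only at hnegbin
  have h1r : 1 - r = η / (1 + η) := by
    rw [hr_def]
    field_simp
    ring
  have hmean : η ^ 2 / ((φ + η) * (1 + η)) * (r / (1 - r) ^ 2)
      + φ * η ^ 4 / ((φ + η) * (1 + η) ^ 4) * (4 * r / (1 - r) ^ 5)
      = (η + 4 * φ) / (η * (φ + η)) := by
    rw [h1r, hr_def]
    field_simp
  refine hmean ▸ (hgeom.add hnegbin).congr_fun fun x => ?_
  rw [pcdPMF, Nat.cast_add_three_choose_three, hr_def, inv_pow, pow_add]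
  field_simp

theorem hasSum_coe_mul_inflated {p : ℕ → ℝ} {m : ℝ} (hp : HasSum (fun y : ℕ => y * p y) m)
    (k : ℕ) (α : ℝ) :
    HasSum (fun y : ℕ => y * (if y = k then α + (1 - α) * p y else (1 - α) * p y))
      (k * α + (1 - α) * m) := by
  refine ((hasSum_ite_eq k ((k : ℝ) * α)).add (hp.mul_left (1 - α))).congr_fun fun y => ?_
  split_ifs with hy
  · rw [hy]
    ring
  · ring

theorem thipcd_mean_general (η φ α : ℝ) (hη : 0 < η) (hφ : 0 < φ) :
    ∑' y : ℕ, (y : ℝ) *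
        (if y = 3 then
          α + (1 - α) * ((η ^ 2 / ((φ + η) * (1 + η) ^ 7))
            * ((1 + η) ^ 3 + 20 * φ * η ^ 2))
        else
          (1 - α) * ((η ^ 2 / ((φ + η) * (1 + η) ^ (y + 4)))
            * ((1 + η) ^ 3
              + (φ * η ^ 2 / 6) * ((y : ℝ) + 1) * ((y : ℝ) + 2) * ((y : ℝ) + 3))))
      = 3 * α + (1 - α) * ((η + 4 * φ) / (η * (φ + η))) := by
  have hφη : φ + η ≠ 0 := by positivity
  have hmean := hasSum_coe_mul_inflated (hasSum_coe_mul_pcdPMF hη hφη) 3 α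
  rw [Nat.cast_ofNat] at hmean
  rw [← hmean.tsum_eq]
  refine tsum_congr fun y => ?_
  split_ifs with hy
  · rw [hy, pcdPMF_three]
  · rfl

/-- The mean of the three-inflated PCD. -/
theorem thipcd_mean (η φ α : ℝ) (hη : 0 < η) (hφ : 0 < φ) (hα0 : 0 < α) (hα1 : α < 1) :
    ∑' y : ℕ, (y : ℝ) *
        (if y = 3 then
          α + (1 - α) * ((η ^ 2 / ((φ + η) * (1 + η) ^ 7))
            * ((1 + η) ^ 3 + 20 * φ * η ^ 2))
        else
          (1 - α) * ((η ^ 2 / ((φ + η) * (1 + η) ^ (y + 4)))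
            * ((1 + η) ^ 3
              + (φ * η ^ 2 / 6) * ((y : ℝ) + 1) * ((y : ℝ) + 2) * ((y : ℝ) + 3))))
      = 3 * α + (1 - α) * ((η + 4 * φ) / (η * (φ + η))) :=
  thipcd_mean_general η φ α hη hφ
end

section
/- For all real parameters η > 0, φ > 0, every α with 0 < α < 1, and every real s with 0 ≤ s < 1, the probability generating function of the three-inflated PCD is ∑_{y=0}^∞ s^y·P(y) = α·s³ + (1−α)·(η²/(φ+η))·[((η−s+1)³ + φη²)/(η−s+1)⁴]. -/
/-!
Since `(x + 1)(x + 2)(x + 3) / 6 = C(x + 3, 3)`, the PCD mass splits into a geometric and a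
negative binomial term, `p(x) = η² / (φ + η) · ((1 + η)^-(x+1) + φ η² C(x + 3, 3) (1 + η)^-(x+4))`,
and both power series are summed by `∑ C(x + k, k) s ^ x / a ^ (x + k + 1) = (a - s)^-(k+1)`.
Inflating at `3` adds `α s³` and scales the rest by `1 - α`.
-/

theorem Nat.cast_add_three_choose_three_s19 {K : Type*} [Field K] [CharZero K] (n : ℕ) :
    ((n + 3).choose 3 : K) = ((n : K) + 1) * ((n : K) + 2) * ((n : K) + 3) / 6 := by
  rw [Nat.cast_choose_eq_ascPochhammer_div, show n + 3 - (3 - 1) = n + 1 by omega]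
  simp only [ascPochhammer_succ_eval, ascPochhammer_zero, Polynomial.eval_one, Nat.factorial]
  push_cast
  ring

theorem hasSum_add_choose_mul_pow_div_pow {𝕜 : Type*} [NormedField 𝕜] [CompleteSpace 𝕜]
    {s a : 𝕜} (k : ℕ) (hs : ‖s‖ < ‖a‖) :
    HasSum (fun n : ℕ => ((n + k).choose k : 𝕜) * s ^ n / a ^ (n + k + 1))
      (1 / (a - s) ^ (k + 1)) := by
  have ha : a ≠ 0 := norm_pos_iff.mp ((norm_nonneg s).trans_lt hs)
  have hr : ‖s / a‖ < 1 := by rwa [norm_div, div_lt_one ((norm_nonneg s).trans_lt hs)]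
  convert (hasSum_choose_mul_geometric_of_norm_lt_one k hr).div_const (a ^ (k + 1)) using 1
  · ext n
    rw [div_pow, pow_add _ (n + k), pow_add]
    field_simp
    ring
  · rw [one_sub_div ha, div_pow, one_div_div, div_div, mul_comm, ← div_div,
      div_self (pow_ne_zero _ ha)]

noncomputable def poissonCopounPMF (η φ : ℝ) (x : ℕ) : ℝ :=
  η ^ 2 / ((φ + η) * (1 + η) ^ (x + 4))
    * ((1 + η) ^ 3 + (φ * η ^ 2 / 6) * ((x : ℝ) + 1) * ((x : ℝ) + 2) * ((x : ℝ) + 3))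

def inflate {R : Type*} [Ring R] (α : R) (k : ℕ) (p : ℕ → R) (y : ℕ) : R :=
  if y = k then α + (1 - α) * p y else (1 - α) * p y

theorem pow_mul_poissonCopounPMF {η : ℝ} (φ s : ℝ) (hη : 1 + η ≠ 0) (x : ℕ) :
    s ^ x * poissonCopounPMF η φ x = η ^ 2 / (φ + η)
      * (((x + 0).choose 0 : ℝ) * s ^ x / (1 + η) ^ (x + 0 + 1)
        + φ * η ^ 2 * (((x + 3).choose 3 : ℝ) * s ^ x / (1 + η) ^ (x + 3 + 1))) := by
  rw [poissonCopounPMF, Nat.cast_add_three_choose_three_s19, Nat.choose_zero_right, Nat.cast_one]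
  field_simp
  ring

theorem hasSum_pow_mul_poissonCopounPMF {η s : ℝ} (φ : ℝ) (hs : |s| < 1 + η) :
    HasSum (fun x => s ^ x * poissonCopounPMF η φ x)
      (η ^ 2 / (φ + η) * (((η - s + 1) ^ 3 + φ * η ^ 2) / (η - s + 1) ^ 4)) := by
  have hη : 0 < 1 + η := (abs_nonneg s).trans_lt hs
  have hs' : ‖s‖ < ‖1 + η‖ := by rwa [Real.norm_eq_abs, Real.norm_eq_abs, abs_of_pos hη]
  have hsum : ((η - s + 1) ^ 3 + φ * η ^ 2) / (η - s + 1) ^ 4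
      = 1 / (1 + η - s) ^ (0 + 1) + φ * η ^ 2 * (1 / (1 + η - s) ^ (3 + 1)) := by
    have : η - s + 1 ≠ 0 := by linarith [le_abs_self s]
    rw [show 1 + η - s = η - s + 1 by ring]
    field_simp
    ring
  rw [funext (pow_mul_poissonCopounPMF φ s hη.ne'), hsum]
  exact ((hasSum_add_choose_mul_pow_div_pow 0 hs').add
    ((hasSum_add_choose_mul_pow_div_pow 3 hs').mul_left (φ * η ^ 2))).mul_left (η ^ 2 / (φ + η))

theorem HasSum.pow_mul_inflate {R : Type*} [CommRing R] [TopologicalSpace R]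
    [IsTopologicalRing R] {p : ℕ → R} {s G : R} (h : HasSum (fun y => s ^ y * p y) G)
    (α : R) (k : ℕ) :
    HasSum (fun y => s ^ y * inflate α k p y) (α * s ^ k + (1 - α) * G) := by
  convert (hasSum_ite_eq k (α * s ^ k)).add (h.mul_left (1 - α)) using 1
  ext y
  rw [inflate]
  split_ifs with hy
  · subst hy; ring
  · ring

theorem thipcd_pgf_general (η φ α s : ℝ) (hη : 0 < η) (hs0 : 0 ≤ s) (hs1 : s < 1) :
    ∑' y : ℕ, s ^ y *
        (if y = 3 then
          α + (1 - α) * ((η ^ 2 / ((φ + η) * (1 + η) ^ 7))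
            * ((1 + η) ^ 3 + 20 * φ * η ^ 2))
        else
          (1 - α) * ((η ^ 2 / ((φ + η) * (1 + η) ^ (y + 4)))
            * ((1 + η) ^ 3
              + (φ * η ^ 2 / 6) * ((y : ℝ) + 1) * ((y : ℝ) + 2) * ((y : ℝ) + 3))))
      = α * s ^ 3 + (1 - α) * (η ^ 2 / (φ + η))
          * (((η - s + 1) ^ 3 + φ * η ^ 2) / (η - s + 1) ^ 4) := by
  have hs : |s| < 1 + η := by rw [abs_of_nonneg hs0]; linarith
  have hp3 : η ^ 2 / ((φ + η) * (1 + η) ^ 7) * ((1 + η) ^ 3 + 20 * φ * η ^ 2)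
      = poissonCopounPMF η φ 3 := by
    unfold poissonCopounPMF
    push_cast
    ring
  rw [mul_assoc (1 - α),
    ← ((hasSum_pow_mul_poissonCopounPMF φ hs).pow_mul_inflate α 3).tsum_eq]
  refine tsum_congr fun y => ?_
  rw [inflate]
  split_ifs with hy
  · rw [hy, hp3]
  · rfl

/-- The probability generating function of the three-inflated PCD. -/
theorem thipcd_pgf (η φ α s : ℝ) (hη : 0 < η) (hφ : 0 < φ)
    (hα0 : 0 < α) (hα1 : α < 1) (hs0 : 0 ≤ s) (hs1 : s < 1) :
    ∑' y : ℕ, s ^ y *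
        (if y = 3 then
          α + (1 - α) * ((η ^ 2 / ((φ + η) * (1 + η) ^ 7))
            * ((1 + η) ^ 3 + 20 * φ * η ^ 2))
        else
          (1 - α) * ((η ^ 2 / ((φ + η) * (1 + η) ^ (y + 4)))
            * ((1 + η) ^ 3
              + (φ * η ^ 2 / 6) * ((y : ℝ) + 1) * ((y : ℝ) + 2) * ((y : ℝ) + 3))))
      = α * s ^ 3 + (1 - α) * (η ^ 2 / (φ + η))
          * (((η - s + 1) ^ 3 + φ * η ^ 2) / (η - s + 1) ^ 4) :=
  thipcd_pgf_general η φ α s hη hs0 hs1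
end
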